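/- Deleting from a q-sequence database all items whose singleton-sequence SWU is below δ·u(D) does not remove any high-utility sequential pattern: every sequence t with u(t) ≥ δ·u(D) contains only items i with SWU(⟨i⟩) ≥ δ·u(D). -/

import Mathlib

open scoped BigOperators

/-- A q-item: an item (ℕ) together with its utility (ℝ). -/
abbrev QItem := ℕ × ℝ
/-- An element of a q-sequence: a finite collection of q-items. -/
abbrev QElem := List QItem
/-- A q-sequence: a list of elements. -/
abbrev QSeq := List QElem
/-- A quantitative sequential database: a finite list of q-sequences. -/
abbrev QDB := List QSeq
/-- A (pattern) sequence: a list of itemsets. -/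
abbrev Pattern := List (Finset ℕ)

def qElemUtil (e : QElem) : ℝ := (e.map Prod.snd).sum
def qSeqUtil (s : QSeq) : ℝ := (s.map qElemUtil).sum
def dbUtil (D : QDB) : ℝ := (D.map qSeqUtil).sum
def qElemItems (e : QElem) : Finset ℕ := (e.map Prod.fst).toFinset
def qSeqLen (s : QSeq) : ℕ := (s.map List.length).sum

def NonnegSeq (s : QSeq) : Prop := ∀ e ∈ s, ∀ p ∈ e, 0 ≤ p.2
def NonnegDB (D : QDB) : Prop := ∀ s ∈ D, NonnegSeq s

/-- Utility of the q-items of element `e` matched by itemset `X`. -/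
def matchedUtil (X : Finset ℕ) (e : QElem) : ℝ :=
  ((e.filter (fun p => decide (p.1 ∈ X))).map Prod.snd).sum

/-- `φ` is an (order-preserving) match of pattern `t` in q-sequence `s`. -/
def IsMatch (t : Pattern) (s : QSeq) (φ : Fin t.length → Fin s.length) : Prop :=
  StrictMono φ ∧ ∀ i : Fin t.length, t.get i ⊆ qElemItems (s.get (φ i))

/-- `t ⊆ s`: the pattern `t` is contained in the q-sequence `s`. -/
def Contains (t : Pattern) (s : QSeq) : Prop := ∃ φ, IsMatch t s φ

/-- Total utility of the q-items matched by the match `φ`. -/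
def matchUtil (t : Pattern) (s : QSeq) (φ : Fin t.length → Fin s.length) : ℝ :=
  ∑ i, matchedUtil (t.get i) (s.get (φ i))

/-- `u(t,s)`: the maximum utility over all matches of `t` in `s`. -/
noncomputable def patUtilIn (t : Pattern) (s : QSeq) : ℝ :=
  sSup {v | ∃ φ, IsMatch t s φ ∧ matchUtil t s φ = v}

/-- The pivot (last used element position) of a match. -/
def pivot (t : Pattern) (s : QSeq) (φ : Fin t.length → Fin s.length) : ℕ :=
  Finset.univ.sup (fun i => (φ i : ℕ))

/-- Pivot position of the first (leftmost) match of `t` in `s`. -/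
noncomputable def firstPivot (t : Pattern) (s : QSeq) : ℕ :=
  sInf {p | ∃ φ, IsMatch t s φ ∧ pivot t s φ = p}

/-- Remaining utility of `s` strictly after position `p`. -/
def restUtil (s : QSeq) (p : ℕ) : ℝ := qSeqUtil (s.drop (p + 1))

/-- `u(⟨s − t⟩_rest)`: utility of the part of `s` after the first match of `t`. -/
noncomputable def restAfterFirst (t : Pattern) (s : QSeq) : ℝ :=
  restUtil s (firstPivot t s)

open Classical in
/-- Sequence-weighted utilization of `t` in `D`. -/
noncomputable def SWU (t : Pattern) (D : QDB) : ℝ :=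
  (D.map (fun s => if Contains t s then qSeqUtil s else 0)).sum

open Classical in
/-- `u(t)`: total utility of `t` in the database `D`. -/
noncomputable def patUtil (t : Pattern) (D : QDB) : ℝ :=
  (D.map (fun s => if Contains t s then patUtilIn t s else 0)).sum

open Classical in
/-- Sequence extension utility of `t` in `D`. -/
noncomputable def SEU (t : Pattern) (D : QDB) : ℝ :=
  (D.map (fun s => if Contains t s then patUtilIn t s + restAfterFirst t s else 0)).sum

/-- `t` is a subsequence of `t'`. -/
def Subseq (t t' : Pattern) : Prop :=
  ∃ φ : Fin t.length → Fin t'.length, StrictMono φ ∧ ∀ i, t.get i ⊆ t'.get (φ i)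

/-- I-Concatenation: insert item `i` into the last itemset of `t`. -/
def IConcat (t : Pattern) (i : ℕ) : Pattern :=
  match t with
  | [] => [{i}]
  | [e] => [insert i e]
  | e :: rest => e :: IConcat rest i

/-- S-Concatenation: append the singleton itemset `{i}` at the end of `t`. -/
def SConcat (t : Pattern) (i : ℕ) : Pattern := t ++ [{i}]

/-- Length of a pattern: total number of items. -/
def patLength (t : Pattern) : ℕ := (t.map Finset.card).sum
/-- Size of a pattern: number of itemsets. -/
def patSize (t : Pattern) : ℕ := t.length

lemma qElemUtil_nonneg {e : QElem} (h : ∀ p ∈ e, 0 ≤ p.2) : 0 ≤ qElemUtil e := by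
  apply List.sum_nonneg
  intro x hx
  obtain ⟨p, hp, rfl⟩ := List.mem_map.1 hx
  exact h p hp

lemma qSeqUtil_nonneg {s : QSeq} (h : NonnegSeq s) : 0 ≤ qSeqUtil s := by
  apply List.sum_nonneg
  intro x hx
  obtain ⟨e, he, rfl⟩ := List.mem_map.1 hx
  exact qElemUtil_nonneg (h e he)

lemma matchedUtil_le {X : Finset ℕ} {e : QElem} (h : ∀ p ∈ e, 0 ≤ p.2) :
    matchedUtil X e ≤ qElemUtil e := by
  apply List.Sublist.sum_le_sum
  · exact List.Sublist.map Prod.snd List.filter_sublist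
  · intro a ha
    obtain ⟨p, hp, rfl⟩ := List.mem_map.1 ha
    exact h p hp

lemma matchUtil_le_qSeqUtil {t : Pattern} {s : QSeq} {φ : Fin t.length → Fin s.length}
    (hs : NonnegSeq s) (hφ : IsMatch t s φ) : matchUtil t s φ ≤ qSeqUtil s := by
  have hmem : ∀ j : Fin s.length, s.get j ∈ s := fun j => List.get_mem s j
  have h1 : matchUtil t s φ ≤ ∑ i : Fin t.length, qElemUtil (s.get (φ i)) :=
    Finset.sum_le_sum fun i _ => matchedUtil_le (hs _ (hmem (φ i)))
  have h2 : ∑ i : Fin t.length, qElemUtil (s.get (φ i))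
      ≤ ∑ j : Fin s.length, qElemUtil (s.get j) := by
    calc ∑ i : Fin t.length, qElemUtil (s.get (φ i))
        = ∑ j ∈ Finset.univ.image φ, qElemUtil (s.get j) :=
          (Finset.sum_image (f := fun j => qElemUtil (s.get j)) (fun a _ b _ hab => hφ.1.injective hab)).symm
      _ ≤ ∑ j : Fin s.length, qElemUtil (s.get j) := by
          apply Finset.sum_le_sum_of_subset_of_nonneg (Finset.subset_univ _)
          intro j _ _
          exact qElemUtil_nonneg (hs _ (hmem j))
  have h3 : ∑ j : Fin s.length, qElemUtil (s.get j) = qSeqUtil s := by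
    unfold qSeqUtil
    rw [← Fin.sum_univ_fun_getElem s qElemUtil]
    rfl
  exact h1.trans (h2.trans_eq h3)

lemma patUtilIn_le {t : Pattern} {s : QSeq} (hs : NonnegSeq s) :
    patUtilIn t s ≤ qSeqUtil s := by
  apply Real.sSup_le
  · rintro v ⟨φ, hφ, rfl⟩
    exact matchUtil_le_qSeqUtil hs hφ
  · exact qSeqUtil_nonneg hs

lemma contains_singleton {t : Pattern} {s : QSeq} (h : Contains t s)
    {X : Finset ℕ} (hX : X ∈ t) {i : ℕ} (hi : i ∈ X) : Contains [{i}] s := by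
  obtain ⟨φ, hmono, hsub⟩ := h
  obtain ⟨j, hj⟩ := List.mem_iff_get.1 hX
  refine ⟨fun _ => φ j, fun a b hab => ?_, fun k => ?_⟩
  · have ha : a.1 < 1 := a.isLt
    have hb : b.1 < 1 := b.isLt
    have hab' := Fin.lt_def.mp hab
    omega
  have : ([({i} : Finset ℕ)]).get k = {i} := by
    rcases k with ⟨_ | n, hn⟩
    · rfl
    · simp at hn
  rw [this]
  intro x hx
  rw [Finset.mem_singleton] at hx
  subst hx
  exact hsub j (hj ▸ hi)

lemma patUtil_le_SWU (D : QDB) (hD : NonnegDB D) (t : Pattern)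
    {X : Finset ℕ} (hX : X ∈ t) {i : ℕ} (hi : i ∈ X) :
    patUtil t D ≤ SWU [{i}] D := by
  unfold patUtil SWU
  induction D with
  | nil => simp
  | cons s D ih =>
    have hs := hD s List.mem_cons_self
    have hD' : NonnegDB D := fun s' hs' => hD s' (List.mem_cons_of_mem _ hs')
    simp only [List.map_cons, List.sum_cons]
    refine add_le_add ?_ (ih hD')
    by_cases hc : Contains t s
    · rw [if_pos hc, if_pos (contains_singleton hc hX hi)]
      exact patUtilIn_le hs
    · rw [if_neg hc]
      split
      · exact qSeqUtil_nonneg hs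
      · exact le_refl 0

/-- deleting items whose singleton SWU is below `δ·u(D)` loses no
high-utility sequential pattern: every HUSP `t` contains only items `i` with
`SWU(⟨i⟩) ≥ δ·u(D)`. -/
theorem stmt13 (D : QDB) (hD : NonnegDB D) (δ : ℝ) (hδ0 : 0 < δ) (hδ1 : δ ≤ 1)
    (t : Pattern) (h : δ * dbUtil D ≤ patUtil t D) :
    ∀ X ∈ t, ∀ i ∈ X, δ * dbUtil D ≤ SWU [{i}] D := by
  intro X hX i hi
  exact h.trans (patUtil_le_SWU D hD t hX hi)
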